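/- Exact penalty bound: let f, g : S → ℝ with f Lipschitz with constant L on S, and suppose x* minimizes f over the feasible set {x ∈ S : g(x) ≤ K}. If moreover for every x ∈ S there exists a feasible point y with dist(x, y) ≤ (g(x) - K)₊ (a metric regularity assumption with modulus 1), then for any λ ≥ L, x* minimizes the penalized functional f(x) + λ (g(x) - K)₊ over S. -/

import Mathlib

/-!
Moving a point `x` to a feasible `y` with `dist x y ≤ (g x - K)₊` changes `f` by at most
`L · dist x y ≤ λ (g x - K)₊`, so the penalty term pays for the move, and `f y ≥ f x*` by minimality.
-/

open scoped NNReal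

theorem LipschitzWith.le_add_mul_of_forall_exists_dist_le {α : Type*} [PseudoMetricSpace α]
    {f p : α → ℝ} {L : ℝ≥0} (hf : LipschitzWith L f) {F : Set α} {x₀ : α}
    (hmin : ∀ y ∈ F, f x₀ ≤ f y) (hnear : ∀ x, ∃ y ∈ F, dist x y ≤ p x)
    {lam : ℝ} (hlam : (L : ℝ) ≤ lam) (x : α) :
    f x₀ ≤ f x + lam * p x := by
  obtain ⟨y, hyF, hxy⟩ := hnear x
  calc f x₀ ≤ f y := hmin y hyF
    _ ≤ f x + L * dist y x := hf.le_add_mul y x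
    _ ≤ f x + lam * p x := by
      rw [dist_comm]
      gcongr
      exact L.coe_nonneg.trans hlam

theorem clarke_exact_penalty
    {S : Type*} [MetricSpace S] (f g : S → ℝ) (L : NNReal)
    (hf : LipschitzWith L f) (K : ℝ)
    (xstar : S) (hfeas : g xstar ≤ K)
    (hmin : ∀ x : S, g x ≤ K → f xstar ≤ f x)
    (hreg : ∀ x : S, ∃ y : S, g y ≤ K ∧ dist x y ≤ max (g x - K) 0)
    (lam : ℝ) (hlam : (L : ℝ) ≤ lam) :
    ∀ x : S, f xstar + lam * max (g xstar - K) 0 ≤ f x + lam * max (g x - K) 0 := by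
  intro x
  have hpenalty : max (g xstar - K) 0 = 0 := max_eq_right (sub_nonpos.2 hfeas)
  rw [hpenalty, mul_zero, add_zero]
  exact hf.le_add_mul_of_forall_exists_dist_le (F := {y | g y ≤ K}) hmin hreg hlam x
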